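/- Let the cost be 𝒥(A) = ∫₀ᵀ∫_ℝ ψ̃(x,t, u^A_x(x,t)) dx dt + ∫₀ᵀ f(A(t)) dt with ψ̃ measurable, bounded, compactly supported and continuous in its last variable, and f : [A₀,0] → ℝ nondecreasing. Then any minimizer Ā of 𝒥 which additionally minimizes ∫₀ᵀ A(t) dt among all minimizers of 𝒥 satisfies Ā(t) = A₀ for a.e. t in the set { t ∈ [0,T] : u^Ā(0,t) = u^{A₀}(0,t) }. -/

import Mathlib

open MeasureTheory Set Filter

noncomputable section

/-- An `H¹` path on the time interval `[0, t]`: an absolutely continuous function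
whose a.e. derivative is square integrable on `(0, t)`. -/
structure H1Path (t : ℝ) where
  toFun : ℝ → ℝ
  deriv : ℝ → ℝ
  deriv_memL2 : MemLp deriv 2 (volume.restrict (Ioc 0 t))
  self_eq_integral : ∀ s ∈ Icc (0:ℝ) t, toFun s = toFun 0 + ∫ r in (0:ℝ)..s, deriv r

/-- The Lagrangian `L(α) = sup_{p ∈ [-R,0]} (α p - H p)`. -/
def lagrangian (R : ℝ) (H : ℝ → ℝ) (α : ℝ) : ℝ :=
  sSup ((fun p => α * p - H p) '' Icc (-R) 0)

/-- The cost `J^A(γ)` of a path `γ` on `[0, t]`. -/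
def pathCost (LL LR u0 A : ℝ → ℝ) (t : ℝ) (γ : H1Path t) : ℝ :=
  (∫ s in (0:ℝ)..t,
      if 0 < γ.toFun s then LR (γ.deriv s)
      else if γ.toFun s < 0 then LL (γ.deriv s)
      else - A s) + u0 (γ.toFun 0)

/-- The value function `u^A(x,t)`. -/
def valueFun (LL LR u0 A : ℝ → ℝ) (x t : ℝ) : ℝ :=
  sInf {c : ℝ | ∃ γ : H1Path t, γ.toFun t = x ∧ pathCost LL LR u0 A t γ = c}

/-- A path is optimal for `u^A(x,t)` if it attains the infimum. -/
def IsOptimal (LL LR u0 A : ℝ → ℝ) (x t : ℝ) (γ : H1Path t) : Prop :=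
  γ.toFun t = x ∧ pathCost LL LR u0 A t γ = valueFun LL LR u0 A x t

/-- Admissible controls: measurable with values in `[A₀, 0]`. -/
def Admissible (A0 : ℝ) (A : ℝ → ℝ) : Prop :=
  Measurable A ∧ ∀ s, A s ∈ Icc A0 0

/-- The flux cost functional `𝒥(A) = ∫₀ᵀ ∫_ℝ φ(x,t) u^A(x,t) dx dt`. -/
def fluxCost (T : ℝ) (LL LR u0 : ℝ → ℝ) (φ : ℝ → ℝ → ℝ) (A : ℝ → ℝ) : ℝ :=
  ∫ t in Ioc (0:ℝ) T, ∫ x : ℝ, φ x t * valueFun LL LR u0 A x t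

/-- The cost functional `𝒥(A) = ∫₀ᵀ ∫_ℝ φ u^A + ∫₀ᵀ f(A)`. -/
def costJ (T : ℝ) (LL LR u0 : ℝ → ℝ) (φ : ℝ → ℝ → ℝ) (f : ℝ → ℝ) (A : ℝ → ℝ) : ℝ :=
  (∫ t in Ioc (0:ℝ) T, ∫ x : ℝ, φ x t * valueFun LL LR u0 A x t)
    + ∫ t in Ioc (0:ℝ) T, f (A t)

/-- The set `𝒜` of minimizers of the flux cost. -/
def MinA (T A0 : ℝ) (LL LR u0 : ℝ → ℝ) (φ : ℝ → ℝ → ℝ) (A : ℝ → ℝ) : Prop :=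
  Admissible A0 A ∧ ∀ B : ℝ → ℝ, Admissible A0 B →
    fluxCost T LL LR u0 φ A ≤ fluxCost T LL LR u0 φ B

/-- The set `𝒜₁` of minimizers of `∫₀ᵀ A` among elements of `𝒜`. -/
def MinA1 (T A0 : ℝ) (LL LR u0 : ℝ → ℝ) (φ : ℝ → ℝ → ℝ) (A : ℝ → ℝ) : Prop :=
  MinA T A0 LL LR u0 φ A ∧ ∀ B : ℝ → ℝ, MinA T A0 LL LR u0 φ B →
    ∫ s in Ioc (0:ℝ) T, A s ≤ ∫ s in Ioc (0:ℝ) T, B s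

/-- The set `𝒜₂` of minimizers of `∫₀ᵀ s A(s) ds` among elements of `𝒜₁`. -/
def MinA2 (T A0 : ℝ) (LL LR u0 : ℝ → ℝ) (φ : ℝ → ℝ → ℝ) (A : ℝ → ℝ) : Prop :=
  MinA1 T A0 LL LR u0 φ A ∧ ∀ B : ℝ → ℝ, MinA1 T A0 LL LR u0 φ B →
    ∫ s in Ioc (0:ℝ) T, s * A s ≤ ∫ s in Ioc (0:ℝ) T, s * B s

/-- The interval with endpoints `a < b` is a connected component of `S ⊆ ℝ`. -/
def IsConnComp (S : Set ℝ) (a b : ℝ) : Prop :=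
  a < b ∧ ∃ t ∈ S, Ioo a b ⊆ connectedComponentIn S t ∧ connectedComponentIn S t ⊆ Icc a b

/-!
If `Ā > A₀` on a set of positive measure of times `t` with `u^Ā(0,t) = u^{A₀}(0,t)`, pick a
compact subset `K` of positive measure and lower `Ā` to `A₀` on `K`. This does not change the
value function: cutting a path at its last visit of the junction during `K`, the dynamic
programming principle bounds the new cost there by `u^{A₀}(0,τ) = u^Ā(0,τ)`, and afterwards the
path does not see the change of control. As `f` is nondecreasing, the new control is again a
minimizer of `𝒥`, but its integral is strictly smaller than that of `Ā`.

The exceptional set is measurable because waiting at the junction costs at most `-A₀` per unit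
of time, so that `t ↦ u^A(0,t) + A₀ t` is nonincreasing.
-/

lemma ContinuousOn.exists_le_forall_lt {f : ℝ → ℝ} {a b c : ℝ} (hf : ContinuousOn f (Icc a b))
    (hab : a ≤ b) (hb : f b ≤ c) : ∃ σ ∈ Icc a b, f σ ≤ c ∧ ∀ s ∈ Ico a σ, c < f s := by
  have hS : IsClosed (Icc a b ∩ f ⁻¹' Iic c) :=
    hf.preimage_isClosed_of_isClosed isClosed_Icc isClosed_Iic
  have hbdd : BddBelow (Icc a b ∩ f ⁻¹' Iic c) := ⟨a, fun s hs => hs.1.1⟩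
  obtain ⟨hσ, hσc⟩ := hS.csInf_mem ⟨b, ⟨hab, le_rfl⟩, hb⟩ hbdd
  exact ⟨_, hσ, hσc, fun s hs => not_le.1 fun hsc =>
    hs.2.not_ge (csInf_le hbdd ⟨⟨hs.1, hs.2.le.trans hσ.2⟩, hsc⟩)⟩

lemma LipschitzWith.mul_sub_le_sub_of_le_deriv {u : ℝ → ℝ} {K : NNReal} (hu : LipschitzWith K u)
    {a b c : ℝ} (hab : a ≤ b) (hc : ∀ᵐ x, x ∈ Ioc a b → c ≤ deriv u x) :
    c * (b - a) ≤ u b - u a := by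
  have hac := (hu.lipschitzOnWith (s := uIcc a b)).absolutelyContinuousOnInterval
  rw [← hac.integral_deriv_eq_sub, intervalIntegral.integral_of_le hab]
  calc c * (b - a) = ∫ _ in Ioc a b, c := by simp [hab, mul_comm]
    _ ≤ _ := setIntegral_mono_ae_restrict (integrableOn_const measure_Ioc_lt_top.ne)
        hac.intervalIntegrable_deriv.1 ((ae_restrict_iff' measurableSet_Ioc).2 hc)

lemma LipschitzWith.sub_le_mul_sub_of_deriv_le {u : ℝ → ℝ} {K : NNReal} (hu : LipschitzWith K u)
    {a b c : ℝ} (hab : a ≤ b) (hc : ∀ᵐ x, x ∈ Ioc a b → deriv u x ≤ c) :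
    u b - u a ≤ c * (b - a) := by
  have hac := (hu.lipschitzOnWith (s := uIcc a b)).absolutelyContinuousOnInterval
  rw [← hac.integral_deriv_eq_sub, intervalIntegral.integral_of_le hab]
  calc _ ≤ ∫ _ in Ioc a b, c := setIntegral_mono_ae_restrict hac.intervalIntegrable_deriv.1
        (integrableOn_const measure_Ioc_lt_top.ne) ((ae_restrict_iff' measurableSet_Ioc).2 hc)
    _ = c * (b - a) := by simp [hab, mul_comm]

lemma integral_comp_le_integral_comp_of_monotoneOn {α : Type*} [MeasurableSpace α]
    {μ : Measure α} [IsFiniteMeasure μ] {f : ℝ → ℝ} {a b : ℝ} (hab : a ≤ b)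
    (hf : MonotoneOn f (Icc a b)) {A B : α → ℝ} (hA : Measurable A) (hB : Measurable B)
    (hAv : ∀ s, A s ∈ Icc a b) (hBv : ∀ s, B s ∈ Icc a b) (hAB : ∀ s, A s ≤ B s) :
    ∫ s, f (A s) ∂μ ≤ ∫ s, f (B s) ∂μ := by
  have hF : Monotone (IccExtend hab fun x : Icc a b => f x) :=
    Monotone.IccExtend hab fun x y hxy => hf x.2 y.2 hxy
  have hint : ∀ {C : α → ℝ}, Measurable C → (∀ s, C s ∈ Icc a b) →
      Integrable (fun s => f (C s)) μ := fun hC hCv => by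
    refine Integrable.of_bound ((hF.measurable.comp hC).aestronglyMeasurable.congr
      (ae_of_all _ fun s => ?_)) (|f a| + |f b|) (ae_of_all _ fun s => ?_)
    · simp [IccExtend_of_mem hab _ (hCv s)]
    · have h1 := hf ⟨le_rfl, hab⟩ (hCv s) (hCv s).1
      have h2 := hf (hCv s) ⟨hab, le_rfl⟩ (hCv s).2
      rw [Real.norm_eq_abs, abs_le]
      constructor <;> linarith [le_abs_self (f b), neg_abs_le (f a), abs_nonneg (f a),
        abs_nonneg (f b)]
  exact integral_mono (hint hA hAv) (hint hB hBv) fun s => hf (hAv s) (hBv s) (hAB s)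

section Lagrangian

variable {R : ℝ} {H : ℝ → ℝ}

lemma le_lagrangian (hH : ContinuousOn H (Icc (-R) 0)) {p : ℝ} (hp : p ∈ Icc (-R) 0) (α : ℝ) :
    α * p - H p ≤ lagrangian R H α :=
  le_csSup (isCompact_Icc.image_of_continuousOn
    ((continuousOn_const.mul continuousOn_id).sub hH)).bddAbove (mem_image_of_mem _ hp)

lemma lagrangian_le_add (hR : 0 ≤ R) (hH : ContinuousOn H (Icc (-R) 0)) (α β : ℝ) :
    lagrangian R H α ≤ lagrangian R H β + R * |α - β| := by
  refine csSup_le ((nonempty_Icc.2 (by linarith)).image _) ?_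
  rintro _ ⟨p, hp, rfl⟩
  have hp' : |p| ≤ R := abs_le.2 ⟨hp.1, hp.2.trans hR⟩
  have : (α - β) * p ≤ R * |α - β| :=
    (le_abs_self _).trans (by rw [abs_mul, mul_comm]; gcongr)
  linarith [le_lagrangian hH hp β]

lemma lagrangian_lipschitzWith (hR : 0 ≤ R) (hH : ContinuousOn H (Icc (-R) 0)) :
    LipschitzWith R.toNNReal (lagrangian R H) :=
  LipschitzWith.of_le_add_mul' R fun α β => by
    simpa [Real.dist_eq] using lagrangian_le_add hR hH α β

end Lagrangian

namespace H1Path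

variable {t : ℝ}

lemma integrableOn_deriv (γ : H1Path t) : IntegrableOn γ.deriv (Ioc 0 t) :=
  γ.deriv_memL2.integrable one_le_two

lemma intervalIntegrable_deriv (γ : H1Path t) {a b : ℝ} (ha : 0 ≤ a) (hab : a ≤ b)
    (hb : b ≤ t) : IntervalIntegrable γ.deriv volume a b :=
  (intervalIntegrable_iff_integrableOn_Ioc_of_le hab).2 <|
    γ.integrableOn_deriv.mono_set (Ioc_subset_Ioc ha hb)

lemma continuousOn (γ : H1Path t) : ContinuousOn γ.toFun (Icc 0 t) := by
  have hprim := intervalIntegral.continuousOn_primitive (μ := volume) (a := 0) (b := t)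
    (f := γ.deriv) (by rw [integrableOn_Icc_iff_integrableOn_Ioc]; exact γ.integrableOn_deriv)
  refine ((continuousOn_const (c := γ.toFun 0)).add hprim).congr fun s hs => ?_
  rw [γ.self_eq_integral s hs, intervalIntegral.integral_of_le hs.1, Pi.add_apply]

lemma sub_eq_integral (γ : H1Path t) {a b : ℝ} (ha : 0 ≤ a) (hab : a ≤ b) (hb : b ≤ t) :
    γ.toFun b - γ.toFun a = ∫ s in a..b, γ.deriv s := by
  rw [γ.self_eq_integral b ⟨ha.trans hab, hb⟩, γ.self_eq_integral a ⟨ha, hab.trans hb⟩,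
    ← intervalIntegral.integral_add_adjacent_intervals
      (γ.intervalIntegrable_deriv le_rfl ha (hab.trans hb)) (γ.intervalIntegrable_deriv ha hab hb)]
  ring

def restrict (γ : H1Path t) {τ : ℝ} (hτ : τ ≤ t) : H1Path τ where
  toFun := γ.toFun
  deriv := γ.deriv
  deriv_memL2 :=
    γ.deriv_memL2.mono_measure (Measure.restrict_mono (Ioc_subset_Ioc le_rfl hτ) le_rfl)
  self_eq_integral s hs := γ.self_eq_integral s ⟨hs.1, hs.2.trans hτ⟩

@[simp] lemma restrict_toFun (γ : H1Path t) {τ : ℝ} (hτ : τ ≤ t) :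
    (γ.restrict hτ).toFun = γ.toFun :=
  rfl

@[simp] lemma restrict_deriv (γ : H1Path t) {τ : ℝ} (hτ : τ ≤ t) :
    (γ.restrict hτ).deriv = γ.deriv :=
  rfl

def const (t x : ℝ) : H1Path t where
  toFun _ := x
  deriv _ := 0
  deriv_memL2 := memLp_const 0
  self_eq_integral _ _ := by simp

section Glue

variable {τ : ℝ} (γ₁ : H1Path τ) (γ₂ : H1Path t)

lemma memLp_piecewise_deriv :
    MemLp ((Iic τ).piecewise γ₁.deriv γ₂.deriv) 2 (volume.restrict (Ioc 0 t)) := by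
  refine MemLp.piecewise measurableSet_Iic ?_ ?_
  · rw [Measure.restrict_restrict measurableSet_Iic]
    exact γ₁.deriv_memL2.mono_measure
      (Measure.restrict_mono (fun _ hs => mem_Ioc.2 ⟨hs.2.1, hs.1⟩) le_rfl)
  · exact γ₂.deriv_memL2.mono_measure Measure.restrict_le_self

lemma integral_piecewise_deriv_of_le {s : ℝ} (hs : 0 ≤ s) (hsτ : s ≤ τ) :
    ∫ r in (0:ℝ)..s, (Iic τ).piecewise γ₁.deriv γ₂.deriv r = ∫ r in (0:ℝ)..s, γ₁.deriv r :=
  intervalIntegral.integral_congr fun _ hr =>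
    piecewise_eq_of_mem _ _ _ (((uIcc_of_le hs) ▸ hr).2.trans hsτ)

lemma integral_piecewise_deriv_of_ge {a s : ℝ} (ha : τ ≤ a) (has : a ≤ s) :
    ∫ r in a..s, (Iic τ).piecewise γ₁.deriv γ₂.deriv r = ∫ r in a..s, γ₂.deriv r :=
  intervalIntegral.integral_congr_ae <| ae_of_all _ fun _ hr =>
    piecewise_eq_of_notMem _ _ _ (notMem_Iic.2 (ha.trans_lt ((uIoc_of_le has) ▸ hr).1))

def glue (hτ : τ ∈ Icc 0 t) (he : γ₁.toFun τ = γ₂.toFun τ) : H1Path t where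
  toFun := (Iic τ).piecewise γ₁.toFun γ₂.toFun
  deriv := (Iic τ).piecewise γ₁.deriv γ₂.deriv
  deriv_memL2 := memLp_piecewise_deriv γ₁ γ₂
  self_eq_integral s hs := by
    rcases le_or_gt s τ with hsτ | hτs
    · rw [piecewise_eq_of_mem _ _ _ (mem_Iic.2 hsτ), piecewise_eq_of_mem _ _ _ (mem_Iic.2 hτ.1),
        integral_piecewise_deriv_of_le γ₁ γ₂ hs.1 hsτ, γ₁.self_eq_integral s ⟨hs.1, hsτ⟩]
    · have hint : IntervalIntegrable ((Iic τ).piecewise γ₁.deriv γ₂.deriv) volume 0 t :=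
        (intervalIntegrable_iff_integrableOn_Ioc_of_le (hτ.1.trans hτ.2)).2
          ((memLp_piecewise_deriv γ₁ γ₂).integrable one_le_two)
      have hτ' := mem_uIcc_of_le hτ.1 hτ.2
      rw [piecewise_eq_of_notMem _ _ _ (notMem_Iic.2 hτs),
        piecewise_eq_of_mem _ _ _ (mem_Iic.2 hτ.1),
        ← intervalIntegral.integral_add_adjacent_intervals (b := τ)
          (hint.mono_set (uIcc_subset_uIcc_left hτ'))
          (hint.mono_set (uIcc_subset_uIcc hτ' (mem_uIcc_of_le hs.1 hs.2))),
        integral_piecewise_deriv_of_le γ₁ γ₂ hτ.1 le_rfl,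
        integral_piecewise_deriv_of_ge γ₁ γ₂ le_rfl hτs.le,
        ← γ₂.sub_eq_integral hτ.1 hτs.le hs.2, ← he, γ₁.self_eq_integral τ ⟨hτ.1, le_rfl⟩]
      ring

variable {γ₁ γ₂} {hτ : τ ∈ Icc 0 t} {he : γ₁.toFun τ = γ₂.toFun τ} {s : ℝ}

lemma glue_toFun_of_le (hs : s ≤ τ) : (glue γ₁ γ₂ hτ he).toFun s = γ₁.toFun s :=
  piecewise_eq_of_mem _ _ _ (mem_Iic.2 hs)

lemma glue_toFun_of_lt (hs : τ < s) : (glue γ₁ γ₂ hτ he).toFun s = γ₂.toFun s :=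
  piecewise_eq_of_notMem _ _ _ (notMem_Iic.2 hs)

lemma glue_deriv_of_le (hs : s ≤ τ) : (glue γ₁ γ₂ hτ he).deriv s = γ₁.deriv s :=
  piecewise_eq_of_mem _ _ _ (mem_Iic.2 hs)

lemma glue_deriv_of_lt (hs : τ < s) : (glue γ₁ γ₂ hτ he).deriv s = γ₂.deriv s :=
  piecewise_eq_of_notMem _ _ _ (notMem_Iic.2 hs)

lemma glue_toFun_right : (glue γ₁ γ₂ hτ he).toFun t = γ₂.toFun t := by
  rcases hτ.2.lt_or_eq with hτt | rfl
  · exact glue_toFun_of_lt hτt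
  · exact (glue_toFun_of_le le_rfl).trans he

end Glue

end H1Path

def junctionLagrangian (LL LR : ℝ → ℝ) (a x α : ℝ) : ℝ :=
  if 0 < x then LR α else if x < 0 then LL α else -a

def runningCost (LL LR A : ℝ → ℝ) {t : ℝ} (γ : H1Path t) (s : ℝ) : ℝ :=
  junctionLagrangian LL LR (A s) (γ.toFun s) (γ.deriv s)

lemma pathCost_eq {LL LR u0 A : ℝ → ℝ} {t : ℝ} (γ : H1Path t) :
    pathCost LL LR u0 A t γ = (∫ s in (0:ℝ)..t, runningCost LL LR A γ s) + u0 (γ.toFun 0) :=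
  rfl

/-- The properties of the Lagrangians and of the initial datum that the argument uses. The slope
bound `R` of `u0` on the right half-line matches the lower bound `-R α ≤ LR α`, which keeps
`pathCost` bounded below. -/
structure JunctionHyp (R C : ℝ) (LL LR u0 : ℝ → ℝ) : Prop where
  continuous_left : Continuous LL
  continuous_right : Continuous LR
  nonneg_left : ∀ α, 0 ≤ LL α
  nonneg_right : ∀ α, 0 ≤ LR α
  le_left : ∀ α, LL α ≤ C * (|α| + 1)
  le_right : ∀ α, LR α ≤ C * (|α| + 1)
  neg_mul_le_right : ∀ α, -R * α ≤ LR α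
  nonneg : 0 ≤ R
  antitone_u0 : Antitone u0
  neg_mul_le_sub_u0 : ∀ a b, 0 ≤ a → a ≤ b → -R * (b - a) ≤ u0 b - u0 a

lemma junctionHyp_lagrangian {RL RR : ℝ} {HL HR u0 : ℝ → ℝ} {K : NNReal} (hRL : 0 < RL)
    (hRR : 0 < RR) (hHL : ContinuousOn HL (Icc (-RL) 0)) (hHR : ContinuousOn HR (Icc (-RR) 0))
    (hHLb : HL 0 = 0) (hHRa : HR (-RR) = 0) (hHRb : HR 0 = 0) (hu0 : LipschitzWith K u0)
    (hu0deriv : ∀ᵐ x : ℝ,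
      (x < 0 → deriv u0 x ∈ Ioo (-RL) 0) ∧ (0 < x → deriv u0 x ∈ Ioo (-RR) 0)) :
    ∃ C, JunctionHyp RR C (lagrangian RL HL) (lagrangian RR HR) u0 := by
  have hLLb : ∀ α, 0 ≤ lagrangian RL HL α := fun α => by
    simpa [hHLb] using le_lagrangian hHL ⟨neg_nonpos.2 hRL.le, le_rfl⟩ α
  have hLRb : ∀ α, 0 ≤ lagrangian RR HR α := fun α => by
    simpa [hHRb] using le_lagrangian hHR ⟨neg_nonpos.2 hRR.le, le_rfl⟩ α
  set C := max (max RL RR) (max (lagrangian RL HL 0) (lagrangian RR HR 0))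
  have hgrowth : ∀ {R : ℝ} {H : ℝ → ℝ}, 0 < R → R ≤ C → ContinuousOn H (Icc (-R) 0) →
      lagrangian R H 0 ≤ C → ∀ α, lagrangian R H α ≤ C * (|α| + 1) := fun hR hRC hH h0C α => by
    have := lagrangian_le_add hR.le hH α 0
    rw [sub_zero] at this
    nlinarith [abs_nonneg α]
  refine ⟨C, (lagrangian_lipschitzWith hRL.le hHL).continuous,
    (lagrangian_lipschitzWith hRR.le hHR).continuous, hLLb, hLRb,
    hgrowth hRL (le_max_of_le_left (le_max_left _ _)) hHL (le_max_of_le_right (le_max_left _ _)),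
    hgrowth hRR (le_max_of_le_left (le_max_right _ _)) hHR (le_max_of_le_right (le_max_right _ _)),
    fun α => by simpa [hHRa, mul_comm] using le_lagrangian hHR ⟨le_rfl, neg_nonpos.2 hRR.le⟩ α,
    hRR.le, fun a b hab => ?_, fun a b ha hab => ?_⟩
  · have := hu0.sub_le_mul_sub_of_deriv_le hab (c := 0) <| by
      filter_upwards [hu0deriv, Measure.ae_ne volume 0] with x hx hx0 _
      rcases hx0.lt_or_gt with hneg | hpos
      exacts [(hx.1 hneg).2.le, (hx.2 hpos).2.le]
    linarith
  · exact hu0.mul_sub_le_sub_of_le_deriv hab <| by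
      filter_upwards [hu0deriv] with x hx hxab
      exact (hx.2 (ha.trans_lt hxab.1)).1.le

section JunctionLagrangian

variable {R C A0 a b x α : ℝ} {LL LR u0 : ℝ → ℝ}

lemma junctionLagrangian_of_pos (hx : 0 < x) : junctionLagrangian LL LR a x α = LR α :=
  if_pos hx

lemma junctionLagrangian_congr_of_ne (hx : x ≠ 0) :
    junctionLagrangian LL LR a x α = junctionLagrangian LL LR b x α := by
  rcases hx.lt_or_gt with hx | hx <;> simp [junctionLagrangian, hx, hx.not_gt]

lemma junctionLagrangian_anti (hab : a ≤ b) :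
    junctionLagrangian LL LR b x α ≤ junctionLagrangian LL LR a x α := by
  unfold junctionLagrangian
  split_ifs <;> linarith

lemma junctionLagrangian_nonneg (h : JunctionHyp R C LL LR u0) (ha : a ≤ 0) :
    0 ≤ junctionLagrangian LL LR a x α := by
  unfold junctionLagrangian
  split_ifs
  exacts [h.nonneg_right α, h.nonneg_left α, neg_nonneg.2 ha]

lemma junctionLagrangian_le (h : JunctionHyp R C LL LR u0) (ha : a ∈ Icc A0 0) :
    junctionLagrangian LL LR a x α ≤ C * (|α| + 1) - A0 := by
  have hC : 0 ≤ C * (|α| + 1) := (h.nonneg_left α).trans (h.le_left α)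
  unfold junctionLagrangian
  split_ifs
  · linarith [h.le_right α, ha.1, ha.2]
  · linarith [h.le_left α, ha.1, ha.2]
  · linarith [ha.1]

lemma measurable_junctionLagrangian (h : JunctionHyp R C LL LR u0) :
    Measurable fun p : ℝ × ℝ × ℝ => junctionLagrangian LL LR p.1 p.2.1 p.2.2 :=
  Measurable.ite (measurableSet_lt measurable_const measurable_snd.fst)
    (h.continuous_right.measurable.comp measurable_snd.snd)
    (Measurable.ite (measurableSet_lt measurable_snd.fst measurable_const)
      (h.continuous_left.measurable.comp measurable_snd.snd) measurable_fst.neg)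

end JunctionLagrangian

section Admissible

variable {A0 : ℝ} {A : ℝ → ℝ}

lemma Admissible.le_zero (hA : Admissible A0 A) : A0 ≤ 0 :=
  (hA.2 0).1.trans (hA.2 0).2

lemma admissible_const (hA0 : A0 ≤ 0) : Admissible A0 fun _ => A0 :=
  ⟨measurable_const, fun _ => ⟨le_rfl, hA0⟩⟩

lemma Admissible.piecewise_const (hA : Admissible A0 A) {K : Set ℝ} [DecidablePred (· ∈ K)]
    (hK : MeasurableSet K) : Admissible A0 (K.piecewise (fun _ => A0) A) :=
  ⟨Measurable.piecewise hK measurable_const hA.1, fun s => by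
    by_cases hs : s ∈ K
    · simpa [hs] using hA.le_zero
    · simpa [hs] using hA.2 s⟩

lemma piecewise_const_le (hA : Admissible A0 A) (K : Set ℝ) [DecidablePred (· ∈ K)] (s : ℝ) :
    K.piecewise (fun _ => A0) A s ≤ A s := by
  by_cases hs : s ∈ K
  · simpa [hs] using (hA.2 s).1
  · simp [hs]

lemma Admissible.integrableOn (hA : Admissible A0 A) {a b : ℝ} :
    IntegrableOn A (Ioc a b) :=
  Integrable.of_bound hA.1.aestronglyMeasurable (-A0) <| ae_of_all _ fun s =>
    abs_le.2 ⟨by linarith [(hA.2 s).1], by linarith [(hA.2 s).1, (hA.2 s).2]⟩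

lemma setIntegral_piecewise_const_lt (hA : Admissible A0 A) {K : Set ℝ} [DecidablePred (· ∈ K)]
    (hK : MeasurableSet K) {T : ℝ} (hKT : K ⊆ Ioc 0 T)
    (hKA : ∀ s ∈ K, A0 < A s) (hKpos : volume K ≠ 0) :
    ∫ s in Ioc 0 T, K.piecewise (fun _ => A0) A s < ∫ s in Ioc 0 T, A s := by
  have hB := hA.piecewise_const hK
  rw [← sub_pos, ← integral_sub hA.integrableOn hB.integrableOn,
    setIntegral_pos_iff_support_of_nonneg_ae
      (ae_of_all _ fun s => sub_nonneg.2 (piecewise_const_le hA K s))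
      (hA.integrableOn.sub hB.integrableOn)]
  refine pos_iff_ne_zero.2 (mt (measure_mono_null fun s hs => ⟨?_, hKT hs⟩) hKpos)
  simp [Function.mem_support, hs, sub_eq_zero, (hKA s hs).ne']

end Admissible

section RunningCost

variable {R C A0 t : ℝ} {LL LR u0 A : ℝ → ℝ}

lemma integrableOn_runningCost (h : JunctionHyp R C LL LR u0) (hA : Admissible A0 A)
    (γ : H1Path t) : IntegrableOn (runningCost LL LR A γ) (Ioc 0 t) := by
  have hγ : AEMeasurable γ.toFun (volume.restrict (Ioc 0 t)) :=
    (γ.continuousOn.mono Ioc_subset_Icc_self).aemeasurable measurableSet_Ioc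
  have hmeas : AEStronglyMeasurable (runningCost LL LR A γ) (volume.restrict (Ioc 0 t)) :=
    ((measurable_junctionLagrangian h).comp_aemeasurable (hA.1.aemeasurable.prodMk
      (hγ.prodMk γ.deriv_memL2.1.aemeasurable))).aestronglyMeasurable
  refine Integrable.mono' ((γ.integrableOn_deriv.abs.add (integrable_const 1)).const_mul C
    |>.sub (integrable_const A0)) hmeas (ae_of_all _ fun s => ?_)
  exact (abs_of_nonneg (junctionLagrangian_nonneg h (hA.2 s).2)).trans_le
    (junctionLagrangian_le h (hA.2 s))

lemma intervalIntegrable_runningCost (h : JunctionHyp R C LL LR u0) (hA : Admissible A0 A)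
    (γ : H1Path t) {a b : ℝ} (ha : 0 ≤ a) (hab : a ≤ b) (hb : b ≤ t) :
    IntervalIntegrable (runningCost LL LR A γ) volume a b :=
  (intervalIntegrable_iff_integrableOn_Ioc_of_le hab).2 <|
    (integrableOn_runningCost h hA γ).mono_set (Ioc_subset_Ioc ha hb)

lemma pathCost_eq_pathCost_restrict_add (h : JunctionHyp R C LL LR u0) (hA : Admissible A0 A)
    (γ : H1Path t) {τ : ℝ} (hτ : τ ∈ Icc 0 t) :
    pathCost LL LR u0 A t γ
      = pathCost LL LR u0 A τ (γ.restrict hτ.2) + ∫ s in τ..t, runningCost LL LR A γ s := by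
  rw [pathCost_eq, pathCost_eq, ← intervalIntegral.integral_add_adjacent_intervals
    (intervalIntegrable_runningCost h hA γ le_rfl hτ.1 hτ.2)
    (intervalIntegrable_runningCost h hA γ hτ.1 hτ.2 le_rfl)]
  simp only [runningCost, H1Path.restrict]
  ring

end RunningCost

section ValueFun

variable {R C A0 t x : ℝ} {LL LR u0 A B : ℝ → ℝ}

lemma mul_sub_le_integral_runningCost (h : JunctionHyp R C LL LR u0) (hA : Admissible A0 A)
    (γ : H1Path t) {a b : ℝ} (ha : 0 ≤ a) (hab : a ≤ b) (hb : b ≤ t)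
    (hpos : ∀ s ∈ Ico a b, 0 < γ.toFun s) :
    R * (γ.toFun a - γ.toFun b) ≤ ∫ s in a..b, runningCost LL LR A γ s := by
  have hle : (fun s => -R * γ.deriv s) ≤ᵐ[volume.restrict (Icc a b)] runningCost LL LR A γ := by
    rw [EventuallyLE, ae_restrict_iff' measurableSet_Icc]
    filter_upwards [Measure.ae_ne volume b] with s hsb hs
    rw [runningCost, junctionLagrangian_of_pos (hpos s ⟨hs.1, hs.2.lt_of_ne hsb⟩)]
    exact h.neg_mul_le_right _
  calc R * (γ.toFun a - γ.toFun b) = ∫ s in a..b, -R * γ.deriv s := by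
        rw [intervalIntegral.integral_const_mul, ← γ.sub_eq_integral ha hab hb]
        ring
    _ ≤ _ := intervalIntegral.integral_mono_ae_restrict hab
        ((γ.intervalIntegrable_deriv ha hab hb).const_mul _)
        (intervalIntegrable_runningCost h hA γ ha hab hb) hle

lemma integral_runningCost_nonneg (h : JunctionHyp R C LL LR u0) (hA : Admissible A0 A)
    (γ : H1Path t) {a b : ℝ} (hab : a ≤ b) : 0 ≤ ∫ s in a..b, runningCost LL LR A γ s :=
  intervalIntegral.integral_nonneg hab fun s _ => junctionLagrangian_nonneg h (hA.2 s).2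

lemma u0_max_le_pathCost (h : JunctionHyp R C LL LR u0) (hA : Admissible A0 A) (ht : 0 ≤ t)
    (γ : H1Path t) : u0 (max (γ.toFun t) 0) ≤ pathCost LL LR u0 A t γ := by
  set b := max (γ.toFun t) 0
  have hb : 0 ≤ b := le_max_right _ _
  rcases le_or_gt (γ.toFun 0) b with h0 | h0
  · rw [pathCost_eq]
    linarith [h.antitone_u0 h0, integral_runningCost_nonneg h hA γ ht]
  obtain ⟨σ, hσ, hσb, hpos⟩ := γ.continuousOn.exists_le_forall_lt ht (le_max_left _ _)
  have hhead := mul_sub_le_integral_runningCost h hA γ le_rfl hσ.1 hσ.2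
    fun s hs => hb.trans_lt (hpos s hs)
  have htail := integral_runningCost_nonneg h hA γ hσ.2
  have hu0 := h.neg_mul_le_sub_u0 b (γ.toFun 0) hb h0.le
  have hσ' : 0 ≤ R * (b - γ.toFun σ) := mul_nonneg h.nonneg (sub_nonneg.2 hσb)
  rw [pathCost_eq, ← intervalIntegral.integral_add_adjacent_intervals
    (intervalIntegrable_runningCost h hA γ le_rfl hσ.1 hσ.2)
    (intervalIntegrable_runningCost h hA γ hσ.1 hσ.2 le_rfl)]
  linarith

lemma valueFun_le_pathCost (h : JunctionHyp R C LL LR u0) (hA : Admissible A0 A) (ht : 0 ≤ t)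
    (γ : H1Path t) : valueFun LL LR u0 A (γ.toFun t) t ≤ pathCost LL LR u0 A t γ :=
  csInf_le ⟨u0 (max (γ.toFun t) 0), by
    rintro _ ⟨η, hη, rfl⟩
    exact hη ▸ u0_max_le_pathCost h hA ht η⟩ ⟨γ, rfl, rfl⟩

lemma le_valueFun {c : ℝ} (hc : ∀ γ : H1Path t, γ.toFun t = x → c ≤ pathCost LL LR u0 A t γ) :
    c ≤ valueFun LL LR u0 A x t :=
  le_csInf ⟨_, H1Path.const t x, rfl, rfl⟩ (by rintro _ ⟨γ, hγ, rfl⟩; exact hc γ hγ)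

lemma valueFun_anti_control (h : JunctionHyp R C LL LR u0) (hA : Admissible A0 A)
    (hB : Admissible A0 B) (hAB : ∀ s, A s ≤ B s) (ht : 0 ≤ t) :
    valueFun LL LR u0 B x t ≤ valueFun LL LR u0 A x t := by
  refine le_valueFun fun γ hγ => hγ ▸ (valueFun_le_pathCost h hB ht γ).trans ?_
  rw [pathCost_eq, pathCost_eq, add_le_add_iff_right]
  exact intervalIntegral.integral_mono_on ht
    (intervalIntegrable_runningCost h hB γ le_rfl ht le_rfl)
    (intervalIntegrable_runningCost h hA γ le_rfl ht le_rfl)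
    fun s _ => junctionLagrangian_anti (hAB s)

lemma pathCost_glue (h : JunctionHyp R C LL LR u0) (hA : Admissible A0 A) {τ : ℝ}
    (η : H1Path τ) (γ : H1Path t) (hτ : τ ∈ Icc 0 t) (he : η.toFun τ = γ.toFun τ) :
    pathCost LL LR u0 A t (H1Path.glue η γ hτ he)
      = pathCost LL LR u0 A τ η + ∫ s in τ..t, runningCost LL LR A γ s := by
  have hhead : ∫ s in (0:ℝ)..τ, runningCost LL LR A ((η.glue γ hτ he).restrict hτ.2) s
      = ∫ s in (0:ℝ)..τ, runningCost LL LR A η s := by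
    refine intervalIntegral.integral_congr fun s hs => ?_
    have hs : s ≤ τ := ((uIcc_of_le hτ.1) ▸ hs).2
    simp only [runningCost, H1Path.restrict_toFun, H1Path.restrict_deriv,
      H1Path.glue_toFun_of_le hs, H1Path.glue_deriv_of_le hs]
  have htail : ∫ s in τ..t, runningCost LL LR A (η.glue γ hτ he) s
      = ∫ s in τ..t, runningCost LL LR A γ s := by
    refine intervalIntegral.integral_congr_ae (ae_of_all _ fun s hs => ?_)
    have hs : τ < s := ((uIoc_of_le hτ.2) ▸ hs).1
    simp only [runningCost, H1Path.glue_toFun_of_lt hs, H1Path.glue_deriv_of_lt hs]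
  rw [pathCost_eq_pathCost_restrict_add h hA _ hτ, pathCost_eq, pathCost_eq, hhead, htail,
    H1Path.restrict_toFun, H1Path.glue_toFun_of_le hτ.1]

lemma valueFun_le_valueFun_add_integral (h : JunctionHyp R C LL LR u0) (hA : Admissible A0 A)
    (γ : H1Path t) {τ : ℝ} (hτ : τ ∈ Icc 0 t) :
    valueFun LL LR u0 A (γ.toFun t) t
      ≤ valueFun LL LR u0 A (γ.toFun τ) τ + ∫ s in τ..t, runningCost LL LR A γ s := by
  rw [← sub_le_iff_le_add]
  refine le_valueFun fun η hη => sub_le_iff_le_add.2 ?_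
  rw [← pathCost_glue h hA η γ hτ hη, ← H1Path.glue_toFun_right (hτ := hτ) (he := hη)]
  exact valueFun_le_pathCost h hA (hτ.1.trans hτ.2) _

lemma valueFun_zero_le_sub_mul (h : JunctionHyp R C LL LR u0) (hA : Admissible A0 A)
    {t t' : ℝ} (ht : 0 ≤ t) (htt' : t ≤ t') :
    valueFun LL LR u0 A 0 t' ≤ valueFun LL LR u0 A 0 t - A0 * (t' - t) := by
  have hsit := valueFun_le_valueFun_add_integral h hA (H1Path.const t' 0) ⟨ht, htt'⟩
  have hcost : ∫ s in t..t', runningCost LL LR A (H1Path.const t' 0) s ≤ ∫ _ in t..t', (-A0 : ℝ) :=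
    intervalIntegral.integral_mono_on htt'
      (intervalIntegrable_runningCost h hA _ ht htt' le_rfl) intervalIntegrable_const
      fun s _ => by simpa [runningCost, junctionLagrangian, H1Path.const] using (hA.2 s).1
  simp only [H1Path.const, intervalIntegral.integral_const, smul_eq_mul] at hsit hcost
  linarith

lemma measurable_valueFun_zero_max (h : JunctionHyp R C LL LR u0) (hA : Admissible A0 A) :
    Measurable fun t => valueFun LL LR u0 A 0 (max t 0) := by
  have hanti : Antitone fun t => valueFun LL LR u0 A 0 (max t 0) + A0 * max t 0 :=
    fun t t' htt' => by
      linarith [valueFun_zero_le_sub_mul h hA (le_max_right t 0) (max_le_max_right 0 htt')]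
  have hmax : Measurable fun t : ℝ => A0 * max t 0 :=
    measurable_const.mul (measurable_id.max measurable_const)
  convert hanti.measurable.sub hmax using 1
  ext t
  simp

lemma integral_runningCost_congr (γ : H1Path t) {a b : ℝ} (hab : a ≤ b)
    (hBA : ∀ s ∈ Ioc a b, γ.toFun s = 0 → B s = A s) :
    ∫ s in a..b, runningCost LL LR B γ s = ∫ s in a..b, runningCost LL LR A γ s := by
  refine intervalIntegral.integral_congr_ae (ae_of_all _ fun s hs => ?_)
  by_cases h0 : γ.toFun s = 0
  · simp only [runningCost, hBA s ((uIoc_of_le hab) ▸ hs) h0]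
  · exact junctionLagrangian_congr_of_ne h0

/-- Cut an `A`-path at its last visit `τ` of the junction during `K`: up to `τ`, dynamic
programming for `B` and `hKle` bound the cost by `u^A(0,τ)`; after `τ` the path never sits at the
junction during `K`, where alone `A` and `B` differ. -/
lemma valueFun_le_of_eqOn_compl (h : JunctionHyp R C LL LR u0) (hA : Admissible A0 A)
    (hB : Admissible A0 B) {K : Set ℝ} (hK : IsClosed K) (hBA : EqOn B A Kᶜ)
    (hKle : ∀ τ ∈ K, 0 ≤ τ → valueFun LL LR u0 B 0 τ ≤ valueFun LL LR u0 A 0 τ) (ht : 0 ≤ t) :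
    valueFun LL LR u0 B x t ≤ valueFun LL LR u0 A x t := by
  refine le_valueFun fun γ hγ => hγ ▸ ?_
  set S := Icc 0 t ∩ γ.toFun ⁻¹' {0} ∩ K
  rcases S.eq_empty_or_nonempty with hS | hS
  · calc valueFun LL LR u0 B (γ.toFun t) t ≤ pathCost LL LR u0 B t γ :=
          valueFun_le_pathCost h hB ht γ
      _ = pathCost LL LR u0 A t γ := by
          rw [pathCost_eq, pathCost_eq, integral_runningCost_congr γ ht fun s hs h0 =>
            hBA fun hsK => hS.subset ⟨⟨Ioc_subset_Icc_self hs, h0⟩, hsK⟩]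
  have hSb : BddAbove S := ⟨t, fun s hs => hs.1.1.2⟩
  obtain ⟨⟨hτ, hγτ : γ.toFun (sSup S) = 0⟩, hτK⟩ :=
    ((γ.continuousOn.preimage_isClosed_of_isClosed isClosed_Icc isClosed_singleton).inter
      hK).csSup_mem hS hSb
  have htail := integral_runningCost_congr (LL := LL) (LR := LR) γ hτ.2 fun s hs h0 =>
    hBA fun hsK => hs.1.not_ge (le_csSup hSb ⟨⟨⟨hτ.1.trans hs.1.le, hs.2⟩, h0⟩, hsK⟩)
  calc valueFun LL LR u0 B (γ.toFun t) t
      ≤ valueFun LL LR u0 B (γ.toFun (sSup S)) (sSup S)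
          + ∫ s in sSup S..t, runningCost LL LR B γ s :=
        valueFun_le_valueFun_add_integral h hB γ hτ
    _ ≤ pathCost LL LR u0 A (sSup S) (γ.restrict hτ.2)
          + ∫ s in sSup S..t, runningCost LL LR A γ s := by
        have hhead := valueFun_le_pathCost h hA hτ.1 (γ.restrict hτ.2)
        rw [H1Path.restrict_toFun, hγτ] at hhead
        rw [htail, hγτ]
        gcongr
        exact (hKle _ hτK hτ.1).trans hhead
    _ = pathCost LL LR u0 A t γ := (pathCost_eq_pathCost_restrict_add h hA γ hτ).symm

lemma valueFun_piecewise_eq (h : JunctionHyp R C LL LR u0) (hA : Admissible A0 A)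
    {K : Set ℝ} [DecidablePred (· ∈ K)] (hK : IsClosed K)
    (hKA : ∀ τ ∈ K, valueFun LL LR u0 A 0 τ = valueFun LL LR u0 (fun _ => A0) 0 τ)
    (ht : 0 ≤ t) :
    valueFun LL LR u0 (K.piecewise (fun _ => A0) A) x t = valueFun LL LR u0 A x t := by
  have hB := hA.piecewise_const hK.measurableSet
  refine le_antisymm (valueFun_le_of_eqOn_compl h hA hB hK
    (fun s hs => piecewise_eq_of_notMem _ _ _ hs) (fun τ hτ hτ0 => ?_) ht)
    (valueFun_anti_control h hB hA (piecewise_const_le hA K) ht)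
  exact (hKA τ hτ).symm ▸
    valueFun_anti_control h (admissible_const hA.le_zero) hB (fun s => (hB.2 s).1) hτ0

lemma ae_eq_of_forall_isCompact (h : JunctionHyp R C LL LR u0) (hA : Admissible A0 A) {T : ℝ}
    (hK : ∀ K ⊆ Ioc 0 T, IsCompact K → (∀ τ ∈ K, valueFun LL LR u0 A 0 τ
      = valueFun LL LR u0 (fun _ => A0) 0 τ ∧ A0 < A τ) → volume K = 0) :
    ∀ᵐ t ∂(volume.restrict (Ioc 0 T)),
      valueFun LL LR u0 A 0 t = valueFun LL LR u0 (fun _ => A0) 0 t → A t = A0 := by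
  set D := Ioc 0 T ∩ {t | valueFun LL LR u0 A 0 (max t 0)
    = valueFun LL LR u0 (fun _ => A0) 0 (max t 0)} ∩ {t | A0 < A t}
  have hDm : MeasurableSet D := (measurableSet_Ioc.inter (measurableSet_eq_fun
    (measurable_valueFun_zero_max h hA)
    (measurable_valueFun_zero_max h (admissible_const hA.le_zero)))).inter
    (measurableSet_lt measurable_const hA.1)
  have hD : volume D = 0 := by
    simp only [hDm.measure_eq_iSup_isCompact, ENNReal.iSup_eq_zero]
    refine fun K hKD hKc => hK K (hKD.trans fun t ht => ht.1.1) hKc fun τ hτ => ⟨?_, (hKD hτ).2⟩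
    simpa [max_eq_left (hKD hτ).1.1.1.le] using (hKD hτ).1.2
  rw [ae_restrict_iff' measurableSet_Ioc, ae_iff]
  refine measure_mono_null (fun t ht => ?_) hD
  simp only [mem_ofPred_eq, Classical.not_imp] at ht
  obtain ⟨htT, heq, hne⟩ := ht
  exact ⟨⟨htT, by simpa [max_eq_left htT.1.le] using heq⟩, (hA.2 t).1.lt_of_ne (Ne.symm hne)⟩

lemma cost_piecewise_le (h : JunctionHyp R C LL LR u0) (hA : Admissible A0 A)
    {f : ℝ → ℝ} (hf : MonotoneOn f (Icc A0 0)) {K : Set ℝ} [DecidablePred (· ∈ K)]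
    (hK : IsClosed K)
    (hKA : ∀ τ ∈ K, valueFun LL LR u0 A 0 τ = valueFun LL LR u0 (fun _ => A0) 0 τ)
    (ψ : ℝ → ℝ → ℝ → ℝ) (T : ℝ) :
    (∫ t in Ioc 0 T, ∫ x, ψ x t
        (deriv (fun y => valueFun LL LR u0 (K.piecewise (fun _ => A0) A) y t) x))
      + ∫ t in Ioc 0 T, f (K.piecewise (fun _ => A0) A t)
    ≤ (∫ t in Ioc 0 T, ∫ x, ψ x t (deriv (fun y => valueFun LL LR u0 A y t) x))
      + ∫ t in Ioc 0 T, f (A t) := by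
  have hB := hA.piecewise_const hK.measurableSet
  have hflux : ∫ t in Ioc 0 T, ∫ x, ψ x t
        (deriv (fun y => valueFun LL LR u0 (K.piecewise (fun _ => A0) A) y t) x)
      = ∫ t in Ioc 0 T, ∫ x, ψ x t (deriv (fun y => valueFun LL LR u0 A y t) x) :=
    setIntegral_congr_fun measurableSet_Ioc fun t ht => by
      simp only [valueFun_piecewise_eq h hA hK hKA ht.1.le]
  rw [hflux, add_le_add_iff_left]
  exact integral_comp_le_integral_comp_of_monotoneOn hA.le_zero hf hB.1 hA.1 hB.2 hA.2
    (piecewise_const_le hA K)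

end ValueFun

theorem stmt4_general
    (T RL RR : ℝ) (hRL : 0 < RL) (hRR : 0 < RR)
    (HL HR : ℝ → ℝ)
    (hHLreg : ContDiffOn ℝ 2 HL (Icc (-RL) 0))
    (hHRreg : ContDiffOn ℝ 2 HR (Icc (-RR) 0))
    (hHLb : HL 0 = 0)
    (hHRa : HR (-RR) = 0) (hHRb : HR 0 = 0)
    (A0 : ℝ)
    (u0 : ℝ → ℝ) (K : NNReal) (hu0 : LipschitzWith K u0)
    (hu0deriv : ∀ᵐ x : ℝ,
      (x < 0 → deriv u0 x ∈ Ioo (-RL) 0) ∧ (0 < x → deriv u0 x ∈ Ioo (-RR) 0))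
    (LL LR : ℝ → ℝ) (hLL : LL = lagrangian RL HL) (hLR : LR = lagrangian RR HR)
    (ψ : ℝ → ℝ → ℝ → ℝ)
    (f : ℝ → ℝ) (hf : MonotoneOn f (Icc A0 0))
    (J : (ℝ → ℝ) → ℝ)
    (hJ : ∀ A : ℝ → ℝ, J A =
      (∫ t in Ioc (0:ℝ) T, ∫ x : ℝ, ψ x t (deriv (fun y => valueFun LL LR u0 A y t) x))
        + ∫ t in Ioc (0:ℝ) T, f (A t))
    (Abar : ℝ → ℝ) (hAbarAdm : Admissible A0 Abar)
    (hAbarMin : ∀ A : ℝ → ℝ, Admissible A0 A → J Abar ≤ J A)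
    (hAbarMin2 : ∀ A : ℝ → ℝ,
      (Admissible A0 A ∧ ∀ B : ℝ → ℝ, Admissible A0 B → J A ≤ J B) →
      ∫ s in Ioc (0:ℝ) T, Abar s ≤ ∫ s in Ioc (0:ℝ) T, A s) :
    ∀ᵐ t ∂(volume.restrict (Ioc (0:ℝ) T)),
      valueFun LL LR u0 Abar 0 t = valueFun LL LR u0 (fun _ => A0) 0 t → Abar t = A0 := by
  classical
  obtain ⟨C, h⟩ := hLL ▸ hLR ▸ junctionHyp_lagrangian hRL hRR hHLreg.continuousOn
    hHRreg.continuousOn hHLb hHRa hHRb hu0 hu0deriv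
  refine ae_eq_of_forall_isCompact h hAbarAdm fun K hKT hK hKA => by_contra fun hKpos => ?_
  have hJle : J (K.piecewise (fun _ => A0) Abar) ≤ J Abar := by
    rw [hJ, hJ]
    exact cost_piecewise_le h hAbarAdm hf hK.isClosed (fun τ hτ => (hKA τ hτ).1) ψ T
  exact (hAbarMin2 _ ⟨hAbarAdm.piecewise_const hK.measurableSet,
    fun B hB => hJle.trans (hAbarMin B hB)⟩).not_gt
    (setIntegral_piecewise_const_lt hAbarAdm hK.measurableSet hKT
      (fun s hs => (hKA s hs).2) hKpos)

theorem stmt4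
    (T RL RR : ℝ) (hT : 0 < T) (hRL : 0 < RL) (hRR : 0 < RR)
    (HL HR : ℝ → ℝ)
    (hHLreg : ContDiffOn ℝ 2 HL (Icc (-RL) 0))
    (hHRreg : ContDiffOn ℝ 2 HR (Icc (-RR) 0))
    (hHLconv : ∃ m : ℝ, 0 < m ∧ StrongConvexOn (Icc (-RL) 0) m HL)
    (hHRconv : ∃ m : ℝ, 0 < m ∧ StrongConvexOn (Icc (-RR) 0) m HR)
    (hHLa : HL (-RL) = 0) (hHLb : HL 0 = 0)
    (hHRa : HR (-RR) = 0) (hHRb : HR 0 = 0)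
    (A0 : ℝ)
    (hA0 : A0 = max (sInf (HL '' Icc (-RL) 0)) (sInf (HR '' Icc (-RR) 0)))
    (hA0neg : A0 < 0)
    (u0 : ℝ → ℝ) (K : NNReal) (hu0 : LipschitzWith K u0)
    (hu0deriv : ∀ᵐ x : ℝ,
      (x < 0 → deriv u0 x ∈ Ioo (-RL) 0) ∧ (0 < x → deriv u0 x ∈ Ioo (-RR) 0))
    (LL LR : ℝ → ℝ) (hLL : LL = lagrangian RL HL) (hLR : LR = lagrangian RR HR)
    (ψ : ℝ → ℝ → ℝ → ℝ)
    (hψmeas : Measurable (fun q : ℝ × ℝ × ℝ => ψ q.1 q.2.1 q.2.2))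
    (hψbd : ∃ C : ℝ, ∀ x t ρ : ℝ, |ψ x t ρ| ≤ C)
    (hψsupp : ∃ Kc : Set (ℝ × ℝ × ℝ), IsCompact Kc ∧
      ∀ x t ρ : ℝ, (x, t, ρ) ∉ Kc → ψ x t ρ = 0)
    (hψcont : ∀ x t : ℝ, Continuous (fun ρ => ψ x t ρ))
    (f : ℝ → ℝ) (hf : MonotoneOn f (Icc A0 0))
    (J : (ℝ → ℝ) → ℝ)
    (hJ : ∀ A : ℝ → ℝ, J A =
      (∫ t in Ioc (0:ℝ) T, ∫ x : ℝ, ψ x t (deriv (fun y => valueFun LL LR u0 A y t) x))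
        + ∫ t in Ioc (0:ℝ) T, f (A t))
    (Abar : ℝ → ℝ) (hAbarAdm : Admissible A0 Abar)
    (hAbarMin : ∀ A : ℝ → ℝ, Admissible A0 A → J Abar ≤ J A)
    (hAbarMin2 : ∀ A : ℝ → ℝ,
      (Admissible A0 A ∧ ∀ B : ℝ → ℝ, Admissible A0 B → J A ≤ J B) →
      ∫ s in Ioc (0:ℝ) T, Abar s ≤ ∫ s in Ioc (0:ℝ) T, A s) :
    ∀ᵐ t ∂(volume.restrict (Ioc (0:ℝ) T)),
      valueFun LL LR u0 Abar 0 t = valueFun LL LR u0 (fun _ => A0) 0 t → Abar t = A0 :=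
  stmt4_general T RL RR hRL hRR HL HR hHLreg hHRreg hHLb hHRa hHRb A0 u0 K hu0 hu0deriv LL LR hLL
    hLR ψ f hf J hJ Abar hAbarAdm hAbarMin hAbarMin2
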